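/- Fix i ∈ I and let Q^i be a probability satisfying the valuation identity for asset i. Then the process Y S^i is a nonnegative supermartingale under P, the identity S^i_0 Q^i[t < ζ] = E_P[Y_t S^i_t] holds for every t ≥ 0, and consequently Q^i[ζ = ∞] = 1 holds if and only if the process (Y_t S^i_t)_{t≥0} is an actual martingale under P. -/

import Mathlib

open MeasureTheory Filter Set
open scoped NNReal ENNReal

noncomputable section

namespace ExchangeOptions

variable {Ω : Type*} {m : MeasurableSpace Ω}

/-- An extended (possibly infinite-valued) stopping time for the filtration `F`. -/
def IsExtStoppingTime (F : Filtration ℝ≥0 m) (τ : Ω → ℝ≥0∞) : Prop :=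
  ∀ t : ℝ≥0, MeasurableSet[F t] {ω | τ ω ≤ (t : ℝ≥0∞)}

/-- The σ-algebra `F_τ` at an extended stopping time `τ`. -/
def IsExtStoppingTime.measurableSpace {F : Filtration ℝ≥0 m} {τ : Ω → ℝ≥0∞}
    (hτ : IsExtStoppingTime F τ) : MeasurableSpace Ω where
  MeasurableSet' A := ∀ t : ℝ≥0, MeasurableSet[F t] (A ∩ {ω | τ ω ≤ (t : ℝ≥0∞)})
  measurableSet_empty := fun t => by simp
  measurableSet_compl := fun A hA t => by
    have h : Aᶜ ∩ {ω | τ ω ≤ (t : ℝ≥0∞)} =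
        {ω | τ ω ≤ (t : ℝ≥0∞)} \ (A ∩ {ω | τ ω ≤ (t : ℝ≥0∞)}) := by
      ext ω; by_cases h : ω ∈ A <;> simp [h]
    rw [h]
    exact (hτ t).diff (hA t)
  measurableSet_iUnion := fun s hs t => by
    rw [Set.iUnion_inter]
    exact MeasurableSet.iUnion fun n => hs n t

/-- The σ-algebra `F_{τ-}`, generated by `F_0` together with all sets
`A ∩ {s < τ}` where `s : ℝ≥0` and `A ∈ F_s`. -/
def sigmaPre (F : Filtration ℝ≥0 m) (τ : Ω → ℝ≥0∞) : MeasurableSpace Ω :=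
  (F 0 : MeasurableSpace Ω) ⊔ MeasurableSpace.generateFrom
    {B | ∃ (s : ℝ≥0) (A : Set Ω), MeasurableSet[F s] A ∧ B = A ∩ {ω | (s : ℝ≥0∞) < τ ω}}

/-- Evaluation of a process at an extended stopping time (junk value at `∞`). -/
def ev (X : ℝ≥0 → Ω → ℝ) (τ : Ω → ℝ≥0∞) (ω : Ω) : ℝ := X (τ ω).toNNReal ω

/-- The underlying financial model, together with the standing assumptions:
nonnegative adapted assets `S i` vanishing from the default time `ζ` onwards, with
strictly positive a.s.-constant initial values `S0 i`; a nonnegative stochastic discount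
factor `Y` with `Y_0 = 1` a.s.; and a sequence `ζn` of stopping times nicely approximating
the default time such that every stopped process `(Y_{ζn ∧ t} S^i_{ζn ∧ t})_t` is a
`P`-a.s. càdlàg martingale.  The probability `P` lives on `F_∞ = ⨆ t, F t`. -/
structure Model (ι : Type*) {Ω : Type*} {m : MeasurableSpace Ω}
    (F : Filtration ℝ≥0 m) (P : Measure Ω) where
  S : ι → ℝ≥0 → Ω → ℝ
  Y : ℝ≥0 → Ω → ℝ
  S0 : ι → ℝ
  ζ : Ω → ℝ≥0∞
  ζn : ℕ → Ω → ℝ≥0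
  nonempty : Nonempty ι
  hFinf : (⨆ t : ℝ≥0, (F t : MeasurableSpace Ω)) = m
  hP : IsProbabilityMeasure P
  hζ : IsExtStoppingTime F ζ
  S_nonneg : ∀ i t ω, 0 ≤ S i t ω
  S_adapted : ∀ i, Adapted F (S i)
  S_default : ∀ i (t : ℝ≥0) ω, ζ ω ≤ (t : ℝ≥0∞) → S i t ω = 0
  S0_pos : ∀ i, 0 < S0 i
  S0_eq : ∀ i, ∀ᵐ ω ∂P, S i 0 ω = S0 i
  Y_nonneg : ∀ t ω, 0 ≤ Y t ω
  Y0 : ∀ᵐ ω ∂P, Y 0 ω = 1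
  ζn_stop : ∀ n, IsStoppingTime F (fun ω => ((ζn n ω : ℝ≥0) : WithTop ℝ≥0))
  ζn_mono : ∀ ω, Monotone fun n => ζn n ω
  ζn_le : ∀ (n : ℕ) ω, ζn n ω ≤ (n : ℝ≥0)
  ζn_tendsto : ∀ ω, Tendsto (fun n => (ζn n ω : ℝ≥0∞)) atTop (nhds (ζ ω))
  mart : ∀ (n : ℕ) (i : ι),
    Martingale (fun t ω => Y (min (ζn n ω) t) ω * S i (min (ζn n ω) t) ω) F P
  cadlag : ∀ (n : ℕ) (i : ι), ∀ᵐ ω ∂P,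
    (∀ t : ℝ≥0, ContinuousWithinAt
      (fun s => Y (min (ζn n ω) s) ω * S i (min (ζn n ω) s) ω) (Set.Ici t) t) ∧
    (∀ t : ℝ≥0, 0 < t → ∃ l : ℝ, Tendsto
      (fun s => Y (min (ζn n ω) s) ω * S i (min (ζn n ω) s) ω)
      (nhdsWithin t (Set.Iio t)) (nhds l))

variable {ι : Type*} {F : Filtration ℝ≥0 m} {P : Measure Ω}

/-- `Q` satisfies the valuation identity for asset `i`:  `Q` is a probability and, for every
extended stopping time `T` and nonnegative `F_T`-measurable `ξ`,
`E_P[Y_T S^i_T ξ ; T < ζ] = S^i_0 E_Q[ξ ; T < ζ]`. -/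
def Model.ValId (M : Model ι F P) (i : ι) (Q : Measure Ω) : Prop :=
  IsProbabilityMeasure Q ∧
  ∀ (T : Ω → ℝ≥0∞) (hT : IsExtStoppingTime F T) (ξ : Ω → ℝ≥0∞),
    Measurable[hT.measurableSpace] ξ →
    ∫⁻ ω in {ω | T ω < M.ζ ω}, ENNReal.ofReal (ev M.Y T ω * ev (M.S i) T ω) * ξ ω ∂P
      = ENNReal.ofReal (M.S0 i) * ∫⁻ ω in {ω | T ω < M.ζ ω}, ξ ω ∂Q

/-- The asset-price ratio process `R^{ij} = (S^i / S^j) 1_{S^j > 0}`. -/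
def Model.R (M : Model ι F P) (i j : ι) (t : ℝ≥0) (ω : Ω) : ℝ :=
  if 0 < M.S j t ω then M.S i t ω / M.S j t ω else 0

/-- `ρ^{ij} = liminf_n R^{ij}_{ζ_n}` (computed in `ℝ≥0∞`). -/
def Model.rho (M : Model ι F P) (i j : ι) (ω : Ω) : ℝ≥0∞ :=
  Filter.liminf (fun n => ENNReal.ofReal (M.R i j (M.ζn n ω) ω)) atTop

/-- The value `EX^{ij}(T) = E_P[Y_T (S^j_T − S^i_T)_+ ; T < ζ]` of the European option to
exchange asset `i` for asset `j` at time `T`. -/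
def Model.EX (M : Model ι F P) (i j : ι) (T : Ω → ℝ≥0∞) : ℝ≥0∞ :=
  ∫⁻ ω in {ω | T ω < M.ζ ω},
    ENNReal.ofReal (ev M.Y T ω * max (ev (M.S j) T ω - ev (M.S i) T ω) 0) ∂P

/-- The value `AX^{ij}(T) = sup_{τ ≤ T} EX^{ij}(τ)` of the American option to exchange
asset `i` for asset `j` up to time `T`; the supremum is over stopping times `τ ≤ T`. -/
def Model.AX (M : Model ι F P) (i j : ι) (T : Ω → ℝ≥0∞) : ℝ≥0∞ :=
  ⨆ (τ : Ω → ℝ≥0∞) (_ : IsExtStoppingTime F τ) (_ : ∀ ω, τ ω ≤ T ω), M.EX i j τ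

/-! The valuation identity with a constant time `s` and `ξ = 1_A`, `A ∈ F_s`, reads
`E_P[Y_s S^i_s ; A] = S^i_0 Q^i(A ∩ {s < ζ})`. As `s` grows the right-hand side can only
decrease, so `Y S^i` is a supermartingale, and it is a martingale exactly when no mass of
`Q^i` is lost, i.e. when `Q^i[t < ζ] = 1` for every `t`, which is `Q^i[ζ = ∞] = 1`. -/

lemma supermartingale_of_setIntegral_le {ι : Type*} [Preorder ι] {F : Filtration ι m}
    {P : Measure Ω} [SigmaFiniteFiltration P F] {f : ι → Ω → ℝ} (hadp : StronglyAdapted F f)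
    (hint : ∀ i, Integrable (f i) P) (hf : ∀ i j : ι, i ≤ j → ∀ s : Set Ω,
      MeasurableSet[F i] s → ∫ ω in s, f j ω ∂P ≤ ∫ ω in s, f i ω ∂P) :
    Supermartingale f F P := by
  rw [← neg_neg f]
  refine (submartingale_of_setIntegral_le hadp.neg (fun i => (hint i).neg) ?_).neg
  simpa only [integral_neg, Pi.neg_apply, neg_le_neg_iff]

lemma measure_setOf_eq_top_eq_one_iff {Q : Measure Ω} [IsProbabilityMeasure Q] {τ : Ω → ℝ≥0∞}
    (hτ : Measurable τ) :
    Q {ω | τ ω = ∞} = 1 ↔ ∀ t : ℝ≥0, Q {ω | (t : ℝ≥0∞) < τ ω} = 1 := by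
  refine ⟨fun h t => le_antisymm prob_le_one (h ▸ measure_mono fun ω hω => ?_), fun h => ?_⟩
  · simp [hω.out]
  · rw [← prob_compl_eq_zero_iff (measurableSet_eq_fun hτ measurable_const)]
    refine measure_mono_null (t := ⋃ n : ℕ, {ω | ((n : ℝ≥0) : ℝ≥0∞) < τ ω}ᶜ) (fun ω hω => ?_)
      (measure_iUnion_null fun n =>
        (prob_compl_eq_zero_iff (measurableSet_lt measurable_const hτ)).2 (h _))
    obtain ⟨n, hn⟩ := ENNReal.exists_nat_gt hω
    exact mem_iUnion.2 ⟨n, fun h' => lt_asymm hn (by simpa using h')⟩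

lemma isExtStoppingTime_const (F : Filtration ℝ≥0 m) (s : ℝ≥0) :
    IsExtStoppingTime F (fun _ => (s : ℝ≥0∞)) :=
  fun _ => .const _

lemma measurableSet_isExtStoppingTime_const {F : Filtration ℝ≥0 m} {s : ℝ≥0} {A : Set Ω}
    (hA : MeasurableSet[F s] A) :
    MeasurableSet[(isExtStoppingTime_const F s).measurableSpace] A := fun t => by
  by_cases hst : s ≤ t
  · simpa [hst] using F.mono hst _ hA
  · simp [hst]

namespace IsExtStoppingTime

variable {F : Filtration ℝ≥0 m} {τ : Ω → ℝ≥0∞}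

lemma measurableSet_lt (hτ : IsExtStoppingTime F τ) (t : ℝ≥0) :
    MeasurableSet[F t] {ω | (t : ℝ≥0∞) < τ ω} := by
  simpa only [compl_ofPred, not_le] using (hτ t).compl

lemma measurable (hτ : IsExtStoppingTime F τ) : Measurable τ := by
  refine measurable_of_Iic fun x => ?_
  induction x using ENNReal.recTopCoe with
  | top => simp
  | coe t => exact F.le t _ (hτ t)

end IsExtStoppingTime

namespace Model

variable (M : Model ι F P) (i : ι)

def deflatedPrice : ℝ≥0 → Ω → ℝ := fun t ω => M.Y t ω * M.S i t ω

lemma deflatedPrice_nonneg (t : ℝ≥0) (ω : Ω) : 0 ≤ M.deflatedPrice i t ω :=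
  mul_nonneg (M.Y_nonneg t ω) (M.S_nonneg i t ω)

lemma deflatedPrice_eq_zero_of_le {t : ℝ≥0} {ω : Ω} (h : M.ζ ω ≤ t) :
    M.deflatedPrice i t ω = 0 := by
  rw [deflatedPrice, M.S_default i t ω h, mul_zero]

lemma stronglyAdapted_deflatedPrice : StronglyAdapted F (M.deflatedPrice i) := fun t => by
  set B := {ω | (t : ℝ≥0∞) < M.ζ ω}
  -- `Y` is not assumed adapted: on `{t < ζ}`, `Y_t S^i_t` is the eventual value of the stopped
  -- martingales, and off it `Y_t S^i_t = 0`.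
  refine stronglyMeasurable_of_tendsto atTop
    (f := fun n => B.indicator fun ω => M.deflatedPrice i (min (M.ζn n ω) t) ω)
    (fun n => ((M.mart n i).stronglyMeasurable t).indicator (M.hζ.measurableSet_lt t))
    (tendsto_pi_nhds.2 fun ω => ?_)
  by_cases hω : ω ∈ B
  · refine tendsto_const_nhds.congr' ?_
    filter_upwards [(M.ζn_tendsto ω).eventually_const_lt hω] with n hn
    rw [indicator_of_mem hω, min_eq_right (by exact_mod_cast hn.le)]
  · simp only [indicator_of_notMem hω, M.deflatedPrice_eq_zero_of_le i (not_lt.1 hω)]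
    exact tendsto_const_nhds

variable {M i} {Q : Measure Ω}

lemma ValId.lintegral_eq (hQ : M.ValId i Q) {s : ℝ≥0} {A : Set Ω} (hA : MeasurableSet[F s] A) :
    ∫⁻ ω in A, ENNReal.ofReal (M.deflatedPrice i s ω) ∂P
      = ENNReal.ofReal (M.S0 i) * Q (A ∩ {ω | (s : ℝ≥0∞) < M.ζ ω}) := by
  set B := {ω | (s : ℝ≥0∞) < M.ζ ω}
  have hAm : MeasurableSet A := F.le s _ hA
  have hBm : MeasurableSet B := F.le s _ (M.hζ.measurableSet_lt s)
  have hsupp : (fun ω => ENNReal.ofReal (M.deflatedPrice i s ω)).support ⊆ B := fun ω hω => by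
    by_contra hωB
    simp [M.deflatedPrice_eq_zero_of_le i (not_lt.1 hωB)] at hω
  have hξ : Measurable[(isExtStoppingTime_const F s).measurableSpace]
      (A.indicator (1 : Ω → ℝ≥0∞)) :=
    (measurable_const (a := (1 : ℝ≥0∞))).indicator (measurableSet_isExtStoppingTime_const hA)
  calc ∫⁻ ω in A, ENNReal.ofReal (M.deflatedPrice i s ω) ∂P
      = ∫⁻ ω in A ∩ B, ENNReal.ofReal (M.deflatedPrice i s ω) ∂P := by
        rw [← setLIntegral_eq_of_support_subset hsupp, Measure.restrict_restrict hBm, inter_comm]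
    _ = ∫⁻ ω in B, ENNReal.ofReal (M.deflatedPrice i s ω) * A.indicator 1 ω ∂P := by
        rw [← setLIntegral_indicator hAm]
        refine lintegral_congr fun ω => ?_
        by_cases hω : ω ∈ A <;> simp [hω]
    _ = ENNReal.ofReal (M.S0 i) * ∫⁻ ω in B, A.indicator 1 ω ∂Q :=
        hQ.2 _ (isExtStoppingTime_const F s) _ hξ
    _ = ENNReal.ofReal (M.S0 i) * Q (A ∩ B) := by
        rw [lintegral_indicator_one hAm, Measure.restrict_apply hAm]

lemma ValId.integrable (hQ : M.ValId i Q) (t : ℝ≥0) : Integrable (M.deflatedPrice i t) P := by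
  have := hQ.1
  refine ⟨((M.stronglyAdapted_deflatedPrice i t).mono (F.le t)).aestronglyMeasurable, ?_⟩
  rw [hasFiniteIntegral_iff_ofReal (.of_forall (M.deflatedPrice_nonneg i t)),
    ← setLIntegral_univ, hQ.lintegral_eq MeasurableSet.univ]
  exact ENNReal.mul_lt_top ENNReal.ofReal_lt_top (measure_lt_top _ _)

lemma ValId.setIntegral_eq (hQ : M.ValId i Q) {s : ℝ≥0} {A : Set Ω} (hA : MeasurableSet[F s] A) :
    ∫ ω in A, M.deflatedPrice i s ω ∂P
      = M.S0 i * (Q (A ∩ {ω | (s : ℝ≥0∞) < M.ζ ω})).toReal := by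
  rw [integral_eq_lintegral_of_nonneg_ae (.of_forall (M.deflatedPrice_nonneg i s))
    ((M.stronglyAdapted_deflatedPrice i s).mono (F.le s)).aestronglyMeasurable.restrict,
    hQ.lintegral_eq hA, ENNReal.toReal_mul, ENNReal.toReal_ofReal (M.S0_pos i).le]

lemma ValId.supermartingale (hQ : M.ValId i Q) : Supermartingale (M.deflatedPrice i) F P := by
  have := M.hP
  have := hQ.1
  refine supermartingale_of_setIntegral_le (M.stronglyAdapted_deflatedPrice i) hQ.integrable
    fun s t hst A hA => ?_
  rw [hQ.setIntegral_eq hA, hQ.setIntegral_eq (F.mono hst _ hA)]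
  refine mul_le_mul_of_nonneg_left (ENNReal.toReal_mono (measure_ne_top _ _) (measure_mono ?_))
    (M.S0_pos i).le
  exact inter_subset_inter_right _ fun ω hω => (ENNReal.coe_le_coe.2 hst).trans_lt hω

lemma integral_deflatedPrice_zero : ∫ ω, M.deflatedPrice i 0 ω ∂P = M.S0 i := by
  have := M.hP
  have h0 : M.deflatedPrice i 0 =ᵐ[P] fun _ => M.S0 i := by
    filter_upwards [M.Y0, M.S0_eq i] with ω hY hS
    rw [deflatedPrice, hY, hS, one_mul]
  simp [integral_congr_ae h0]

lemma ValId.martingale_iff (hQ : M.ValId i Q) :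
    Martingale (M.deflatedPrice i) F P ↔ ∀ t : ℝ≥0, Q {ω | (t : ℝ≥0∞) < M.ζ ω} = 1 := by
  have := M.hP
  have := hQ.1
  have hlt (t : ℝ≥0) : MeasurableSet {ω | (t : ℝ≥0∞) < M.ζ ω} :=
    measurableSet_lt measurable_const M.hζ.measurable
  refine ⟨fun hmart t => ?_, fun h => MeasureTheory.martingale_iff.2 ⟨hQ.supermartingale, ?_⟩⟩
  · have ht := hmart.setIntegral_eq (zero_le : 0 ≤ t) MeasurableSet.univ
    rw [setIntegral_univ, integral_deflatedPrice_zero, hQ.setIntegral_eq MeasurableSet.univ,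
      univ_inter, eq_comm, mul_eq_left₀ (M.S0_pos i).ne'] at ht
    exact (ENNReal.toReal_eq_one_iff _).1 ht
  · refine submartingale_of_setIntegral_le (M.stronglyAdapted_deflatedPrice i) hQ.integrable
      fun s t hst A hA => ?_
    rw [hQ.setIntegral_eq hA, hQ.setIntegral_eq (F.mono hst _ hA),
      measure_inter_conull ((prob_compl_eq_zero_iff (hlt s)).2 (h s)),
      measure_inter_conull ((prob_compl_eq_zero_iff (hlt t)).2 (h t))]

end Model

/-- If `Q^i` satisfies the valuation identity for asset `i`, then `Y S^i`
is a nonnegative supermartingale under `P`, `S^i_0 Q^i[t < ζ] = E_P[Y_t S^i_t]` for every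
`t ≥ 0`, and `Q^i[ζ = ∞] = 1` if and only if `Y S^i` is an actual martingale under `P`. -/
theorem stmt4 {Ω ι : Type*} {m : MeasurableSpace Ω} {F : Filtration ℝ≥0 m} {P : Measure Ω}
    (M : Model ι F P) (i : ι) (Qi : Measure Ω) (hQi : M.ValId i Qi) :
    (∀ (t : ℝ≥0) (ω : Ω), 0 ≤ M.Y t ω * M.S i t ω) ∧
    Supermartingale (fun (t : ℝ≥0) ω => M.Y t ω * M.S i t ω) F P ∧
    (∀ t : ℝ≥0, ENNReal.ofReal (M.S0 i) * Qi {ω | (t : ℝ≥0∞) < M.ζ ω}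
      = ∫⁻ ω, ENNReal.ofReal (M.Y t ω * M.S i t ω) ∂P) ∧
    (Qi {ω | M.ζ ω = ∞} = 1 ↔
      Martingale (fun (t : ℝ≥0) ω => M.Y t ω * M.S i t ω) F P) := by
  have := hQi.1
  refine ⟨M.deflatedPrice_nonneg i, hQi.supermartingale, fun t => ?_, ?_⟩
  · have h := hQi.lintegral_eq (s := t) MeasurableSet.univ
    rw [setLIntegral_univ, univ_inter] at h
    exact h.symm
  · exact (measure_setOf_eq_top_eq_one_iff M.hζ.measurable).trans hQi.martingale_iff.symm

end ExchangeOptions
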